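/- arXiv:2010.11118 — 8 statements merged into one kernel-verified Lean document; each statement's English description precedes it below -/
import Mathlib

section
/- For all real x and n > 1/2, the cubic equation λ³ − (x²/4 + n)λ − x/4 = 0 has three distinct real solutions. -/
/-! The depressed cubic `t³ - p t - q` has its critical points at `±s`, `s = √(p/3)`, where it
takes the values `∓ 2ps/3 - q`. The discriminant condition `27 q² < 4 p³` says exactly that
`|q| < 2ps/3`, so the cubic is positive at `-s` and negative at `s`; together with its signs at
`∓ M` for large `M`, the intermediate value theorem gives a root in each of the three gaps. For the
given cubic, `4 p³ - 27 q² = ((x² + 4n)³ - 27 x²) / 16`, which is positive for `n > 1/2` because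
`(u + 2)³ - 27 u = (u - 1)² (u + 8)`. -/

open Set

lemma exists_three_zeros_of_sign_changes {f : ℝ → ℝ} (hf : Continuous f) {a b c d : ℝ}
    (hab : a < b) (hbc : b < c) (hcd : c < d)
    (ha : f a < 0) (hb : 0 < f b) (hc : f c < 0) (hd : 0 < f d) :
    ∃ x y z : ℝ, x < y ∧ y < z ∧ f x = 0 ∧ f y = 0 ∧ f z = 0 := by
  obtain ⟨x, ⟨-, hxb⟩, hx⟩ := intermediate_value_Ioo hab.le hf.continuousOn ⟨ha, hb⟩
  obtain ⟨y, ⟨hby, hyc⟩, hy⟩ := intermediate_value_Ioo' hbc.le hf.continuousOn ⟨hc, hb⟩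
  obtain ⟨z, ⟨hcz, -⟩, hz⟩ := intermediate_value_Ioo hcd.le hf.continuousOn ⟨hc, hd⟩
  exact ⟨x, y, z, hxb.trans hby, hyc.trans hcz, hx, hy, hz⟩

lemma depressed_cubic_pos_of_large {p q M : ℝ} (hp : 0 ≤ p) (hM : 1 + p + |q| ≤ M) :
    0 < M ^ 3 - p * M - q := by
  have hM1 : 1 ≤ M := by linarith [abs_nonneg q]
  have hMp : 1 + |q| ≤ M ^ 2 - p := by nlinarith
  have : 1 + |q| ≤ M * (M ^ 2 - p) := by nlinarith [abs_nonneg q]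
  linarith [le_abs_self q]

lemma exists_three_roots_depressed_cubic {p q : ℝ} (h : 27 * q ^ 2 < 4 * p ^ 3) :
    ∃ a b c : ℝ, a < b ∧ b < c ∧
      a ^ 3 - p * a - q = 0 ∧ b ^ 3 - p * b - q = 0 ∧ c ^ 3 - p * c - q = 0 := by
  have hp : 0 < p := by
    by_contra! hp
    nlinarith [sq_nonneg q, pow_two_nonneg p]
  set s := √(p / 3)
  have hs0 : 0 < s := Real.sqrt_pos.mpr (by positivity)
  have hs2 : s ^ 2 = p / 3 := Real.sq_sqrt (by positivity)
  have hs3 : s ^ 3 = p / 3 * s := by rw [pow_succ, hs2]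
  have hq : -(2 * p * s / 3) < q ∧ q < 2 * p * s / 3 := by
    refine abs_lt_of_sq_lt_sq' ?_ (by positivity)
    calc q ^ 2 < 4 * p ^ 3 / 27 := by linarith
      _ = (2 * p * s / 3) ^ 2 := by linear_combination (-4 * p ^ 2 / 9) * hs2
  set M := 1 + p + |q| + s
  have hsM : s < M := by linarith [abs_nonneg q]
  have hfM := depressed_cubic_pos_of_large (p := p) (q := q) (M := M) hp.le (by linarith)
  have hfM' := depressed_cubic_pos_of_large (p := p) (q := -q) (M := M) hp.le
    (by rw [abs_neg]; linarith)
  refine exists_three_zeros_of_sign_changes (f := fun t ↦ t ^ 3 - p * t - q)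
    (by fun_prop) (neg_lt_neg hsM) (neg_lt_self hs0) hsM ?_ ?_ ?_ hfM
  · linarith [show (-M) ^ 3 - p * (-M) - q = -(M ^ 3 - p * M - -q) by ring]
  · linarith [show (-s) ^ 3 - p * (-s) - q = 2 * p * s / 3 - q by rw [neg_pow, hs3]; ring]
  · linarith [show s ^ 3 - p * s - q = -(2 * p * s / 3) - q by rw [hs3]; ring]

lemma twenty_seven_mul_sq_lt_cube {n : ℝ} (hn : 1 / 2 < n) (x : ℝ) :
    27 * x ^ 2 < (x ^ 2 + 4 * n) ^ 3 := by
  have hu : 0 ≤ x ^ 2 := sq_nonneg x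
  calc 27 * x ^ 2 ≤ (x ^ 2 + 2) ^ 3 := by
        nlinarith [mul_nonneg (sq_nonneg (x ^ 2 - 1)) (by positivity : (0 : ℝ) ≤ x ^ 2 + 8)]
    _ < (x ^ 2 + 4 * n) ^ 3 := by gcongr; linarith

/-- For all real x and n > 1/2, the cubic λ³ − (x²/4 + n)λ − x/4 = 0 has
three distinct real solutions. -/
theorem cubic_three_distinct_roots (x n : ℝ) (hn : n > 1/2) :
    ∃ a b c : ℝ, a < b ∧ b < c ∧
      a^3 - (x^2/4 + n)*a - x/4 = 0 ∧
      b^3 - (x^2/4 + n)*b - x/4 = 0 ∧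
      c^3 - (x^2/4 + n)*c - x/4 = 0 := by
  refine exists_three_roots_depressed_cubic ?_
  have := twenty_seven_mul_sq_lt_cube hn x
  calc 27 * (x / 4) ^ 2 = 27 * x ^ 2 / 16 := by ring
    _ < (x ^ 2 + 4 * n) ^ 3 / 16 := by linarith
    _ = 4 * (x ^ 2 / 4 + n) ^ 3 := by ring
end

section
/- For all real x and n > 1/2, the cubic equation λ³ − (x²/4 + n)λ − x/4 = 0 has exactly one root λ with λ > |x|/2, and this root is positive. -/
/-!
Write `f(λ) = λ³ - pλ - q` with `p = x²/4 + n`, `q = x/4`, and `c = |x|/2`. Then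
`f(c) ≤ -(n - 1/2)|x|/2 ≤ 0`, strictly when `x ≠ 0`, so a root above `c` exists since
`f → ∞` (for `x = 0` take `√n`). Because the roots of a depressed cubic sum to zero, two
distinct roots `a, b > c ≥ 0` would give `f(c) = (c - a)(c - b)(c + a + b) > 0`.
-/

open Filter Set

theorem tendsto_cubic_atTop (p q : ℝ) :
    Tendsto (fun a : ℝ => a ^ 3 - p * a - q) atTop atTop := by
  have h : Tendsto (fun a : ℝ => a * (a ^ 2 - p)) atTop atTop :=
    tendsto_id.atTop_mul_atTop₀
      (tendsto_atTop_add_const_right _ (-p) (tendsto_pow_atTop two_ne_zero))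
  exact (tendsto_atTop_add_const_right _ (-q) h).congr fun a => by ring

theorem exists_cubic_root_gt {p q c : ℝ} (hc : c ^ 3 - p * c - q < 0) :
    ∃ a, c < a ∧ a ^ 3 - p * a - q = 0 := by
  obtain ⟨a, hca, ha⟩ := intermediate_value_Ioi (by fun_prop) (tendsto_cubic_atTop p q) hc
  exact ⟨a, hca, ha⟩

theorem eq_of_cubic_roots_gt {p q c a b : ℝ} (hc : 0 ≤ c) (hfc : c ^ 3 - p * c - q ≤ 0)
    (hca : c < a) (hcb : c < b) (ha : a ^ 3 - p * a - q = 0) (hb : b ^ 3 - p * b - q = 0) :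
    a = b := by
  by_contra hab
  have hp : p = a ^ 2 + a * b + b ^ 2 :=
    mul_left_cancel₀ (sub_ne_zero.2 hab) (by linear_combination hb - ha)
  have hfactor : c ^ 3 - p * c - q = (c - a) * (c - b) * (c + a + b) := by
    linear_combination (a - c) * hp + ha
  have : 0 < (c - a) * (c - b) * (c + a + b) :=
    mul_pos (mul_pos_of_neg_of_neg (by linarith) (by linarith)) (by linarith)
  linarith

theorem cubic_at_half_abs_le (x n : ℝ) :
    (|x| / 2) ^ 3 - (x ^ 2 / 4 + n) * (|x| / 2) - x / 4 ≤ -((n - 1 / 2) * |x|) / 2 := by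
  nlinarith [sq_abs x, neg_abs_le x, abs_nonneg x]

/-- For all real x and n > 1/2, the cubic λ³ − (x²/4 + n)λ − x/4 = 0 has
exactly one root λ with λ > |x|/2, and this root is positive. -/
theorem cubic_unique_root_above (x n : ℝ) (hn : n > 1/2) :
    ∃! lam : ℝ, lam^3 - (x^2/4 + n)*lam - x/4 = 0 ∧ |x|/2 < lam ∧ 0 < lam := by
  have hfc := cubic_at_half_abs_le x n
  have hc : 0 ≤ |x| / 2 := by positivity
  obtain ⟨a, hca, ha⟩ : ∃ a, |x| / 2 < a ∧ a ^ 3 - (x ^ 2 / 4 + n) * a - x / 4 = 0 := by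
    rcases eq_or_ne x 0 with rfl | hx
    · have hn0 : 0 < n := by linarith
      refine ⟨√n, by simpa using hn0, ?_⟩
      linear_combination √n * Real.sq_sqrt hn0.le
    · have := mul_pos (sub_pos.2 hn) (abs_pos.2 hx)
      exact exists_cubic_root_gt (by linarith)
  refine ⟨a, ⟨ha, hca, hc.trans_lt hca⟩, fun b ⟨hb, hcb, _⟩ => ?_⟩
  have := mul_nonneg (sub_pos.2 hn).le (abs_nonneg x)
  exact eq_of_cubic_roots_gt hc (by linarith) hcb hca hb ha
end

section
/- For n > 1/2, the function w(x) = λ⁺(x)² − x²/4 is strictly increasing in x, where λ⁺(x) is the largest real root of λ³ − (x²/4 + n)λ − x/4 = 0. More precisely, w'(x) = (1/2)·(λ⁺(x)² − x²/4) / (λ⁺(x)·(3λ⁺(x)² − x²/4 − n)) > 0. -/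
/-!
Write `f(μ) = μ³ − pμ − q` with `p = x²/4 + n`, `q = x/4`. Since `n > 1/2`, `f(|x|/2) < 0` for
`x ≠ 0`, so the largest root `λ⁺(x)` exceeds `|x|/2` (for `x = 0` it is `√n`). Expanding `f` at a
root `l` gives `f'(l)(l − b) = −f(b) + (l − b)²(b + 2l)`; with `b = |x|/2` this shows
`f'(l) = 3l² − x²/4 − n > 0`. Differentiating the cubic relation implicitly then expresses `w'` as a
quotient of positive quantities.
-/

theorem exists_cubic_root_ge_of_nonpos {p q b : ℝ} (hb : b ^ 3 - p * b - q ≤ 0) :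
    ∃ μ, b ≤ μ ∧ μ ^ 3 - p * μ - q = 0 := by
  set B := |b| + |p| + |q| + 1
  have hbB : b ≤ B := by linarith [le_abs_self b, abs_nonneg p, abs_nonneg q]
  have hB : 0 ≤ B ^ 3 - p * B - q := by
    have h1 : 1 ≤ B := by linarith [abs_nonneg b, abs_nonneg p, abs_nonneg q]
    have h2 : |p| + |q| + 1 ≤ B := by linarith [abs_nonneg b]
    nlinarith [le_abs_self p, le_abs_self q, mul_le_mul_of_nonneg_left h2 (by linarith : 0 ≤ B),
      mul_le_mul_of_nonneg_left h1 (abs_nonneg q), mul_le_mul_of_nonneg_left h1 (by linarith : 0 ≤ B)]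
  have hcont : ContinuousOn (fun t : ℝ => t ^ 3 - p * t - q) (Set.Icc b B) := by fun_prop
  obtain ⟨μ, hμ, hroot⟩ := intermediate_value_Icc hbB hcont ⟨hb, hB⟩
  exact ⟨μ, hμ.1, hroot⟩

theorem cubic_deriv_pos_of_root_of_nonpos {p q b l : ℝ} (hb : 0 ≤ b) (hbl : b < l)
    (hfb : b ^ 3 - p * b - q ≤ 0) (hl : l ^ 3 - p * l - q = 0) : 0 < 3 * l ^ 2 - p := by
  have htaylor :
      (3 * l ^ 2 - p) * (l - b) = -(b ^ 3 - p * b - q) + (l - b) ^ 2 * (b + 2 * l) := by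
    linear_combination hl
  have hcurv : 0 < (l - b) ^ 2 * (b + 2 * l) := by
    apply mul_pos <;> [exact pow_pos (by linarith) 2; linarith]
  have hprod : 0 < (3 * l ^ 2 - p) * (l - b) := by rw [htaylor]; linarith
  exact pos_of_mul_pos_left hprod (by linarith)

theorem abs_div_two_lt_of_forall_root_le {n x l : ℝ} (hn : 1 / 2 < n)
    (hmax : ∀ μ : ℝ, μ ^ 3 - (x ^ 2 / 4 + n) * μ - x / 4 = 0 → μ ≤ l) : |x| / 2 < l := by
  rcases eq_or_ne x 0 with rfl | hx
  · have hsqrt : √n ^ 3 - ((0 : ℝ) ^ 2 / 4 + n) * √n - 0 / 4 = 0 := by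
      linear_combination √n * Real.sq_sqrt (by linarith : (0 : ℝ) ≤ n)
    simpa using (Real.sqrt_pos.2 (by linarith)).trans_le (hmax _ hsqrt)
  · have hneg : (|x| / 2) ^ 3 - (x ^ 2 / 4 + n) * (|x| / 2) - x / 4 < 0 := by
      nlinarith [sq_abs x, neg_abs_le x, mul_pos (abs_pos.2 hx) (by linarith : (0 : ℝ) < n - 1 / 2)]
    obtain ⟨μ, hμ, hroot⟩ := exists_cubic_root_ge_of_nonpos hneg.le
    exact (hμ.lt_of_ne (by rintro rfl; exact hneg.ne hroot)).trans_le (hmax μ hroot)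

theorem three_mul_sq_sub_pos {n x l : ℝ} (hn : 1 / 2 < n) (hl : |x| / 2 < l)
    (hroot : l ^ 3 - (x ^ 2 / 4 + n) * l - x / 4 = 0) : 0 < 3 * l ^ 2 - x ^ 2 / 4 - n := by
  have := cubic_deriv_pos_of_root_of_nonpos (by positivity) hl
    (by nlinarith [sq_abs x, neg_abs_le x, abs_nonneg x]) hroot
  linarith

section ImplicitDerivative

variable {n : ℝ} {lam : ℝ → ℝ} {x L : ℝ}

theorem deriv_mul_three_mul_sq_sub (hroot : ∀ y, lam y ^ 3 - (y ^ 2 / 4 + n) * lam y - y / 4 = 0)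
    (hL : HasDerivAt lam L x) : L * (3 * lam x ^ 2 - x ^ 2 / 4 - n) = x * lam x / 2 + 1 / 4 := by
  have hF := ((hL.fun_pow 3).fun_sub ((((hasDerivAt_pow 2 x).div_const 4).add_const n).fun_mul
    hL)).fun_sub ((hasDerivAt_id' x).div_const 4)
  have h0 : HasDerivAt (fun y => lam y ^ 3 - (y ^ 2 / 4 + n) * lam y - y / 4) 0 x := by
    rw [funext hroot]
    exact hasDerivAt_const x 0
  have := h0.unique hF
  norm_num at this
  linear_combination -this

theorem hasDerivAt_sq_sub_sq_div_four
    (hroot : ∀ y, lam y ^ 3 - (y ^ 2 / 4 + n) * lam y - y / 4 = 0) (hL : HasDerivAt lam L x)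
    (hlam : lam x ≠ 0) (hD : 3 * lam x ^ 2 - x ^ 2 / 4 - n ≠ 0) :
    HasDerivAt (fun y => lam y ^ 2 - y ^ 2 / 4)
      ((1 / 2) * (lam x ^ 2 - x ^ 2 / 4) / (lam x * (3 * lam x ^ 2 - x ^ 2 / 4 - n))) x := by
  refine ((hL.fun_pow 2).fun_sub ((hasDerivAt_pow 2 x).div_const 4)).congr_deriv ?_
  rw [eq_div_iff (mul_ne_zero hlam hD)]
  norm_num
  linear_combination (2 * lam x ^ 2) * deriv_mul_three_mul_sq_sub hroot hL - (x / 2) * hroot x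

end ImplicitDerivative

/-- For n > 1/2, the function w(x) = λ⁺(x)² − x²/4 is strictly increasing,
where λ⁺(x) is the largest real root of λ³ − (x²/4 + n)λ − x/4 = 0; moreover
w'(x) = (1/2)·(λ⁺(x)² − x²/4)/(λ⁺(x)·(3λ⁺(x)² − x²/4 − n)) > 0. -/
theorem w_strict_mono (n : ℝ) (hn : n > 1/2) (lam : ℝ → ℝ)
    (hroot : ∀ x : ℝ, (lam x)^3 - (x^2/4 + n)*(lam x) - x/4 = 0)
    (hmax : ∀ x μ : ℝ, μ^3 - (x^2/4 + n)*μ - x/4 = 0 → μ ≤ lam x)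
    (hdiff : Differentiable ℝ lam) :
    StrictMono (fun x : ℝ => (lam x)^2 - x^2/4) ∧
    ∀ x : ℝ,
      deriv (fun x : ℝ => (lam x)^2 - x^2/4) x
        = (1/2) * ((lam x)^2 - x^2/4) / (lam x * (3*(lam x)^2 - x^2/4 - n)) ∧
      0 < deriv (fun x : ℝ => (lam x)^2 - x^2/4) x := by
  have hlt (x : ℝ) : |x| / 2 < lam x := abs_div_two_lt_of_forall_root_le hn (hmax x)
  have hD (x : ℝ) : 0 < 3 * lam x ^ 2 - x ^ 2 / 4 - n :=
    three_mul_sq_sub_pos hn (hlt x) (hroot x)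
  have hlam (x : ℝ) : 0 < lam x := by linarith [hlt x, abs_nonneg x]
  have hderiv (x : ℝ) := (hasDerivAt_sq_sub_sq_div_four hroot (hdiff x).hasDerivAt
    (hlam x).ne' (hD x).ne').deriv
  have hpos (x : ℝ) : 0 < deriv (fun x : ℝ => lam x ^ 2 - x ^ 2 / 4) x := by
    rw [hderiv]
    have : x ^ 2 / 4 < lam x ^ 2 := by nlinarith [hlt x, sq_abs x, abs_nonneg x]
    exact div_pos (by linarith) (mul_pos (hlam x) (hD x))
  exact ⟨strictMono_of_deriv_pos hpos, fun x => ⟨hderiv x, hpos x⟩⟩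
end

section
/- Let n > 1/2 and let y : ℝ → ℝ be a C¹ solution of y'(x) = y(x)² − x·y(x) − (n − 1/2) such that for all sufficiently large x, y(x) > 0 and y'(x) > 0. Then for all real x, y'(x) > 0 and y(x) > (x + √(x² + 4n − 2))/2. -/
/-!
Factor the right-hand side as `y' = (y - λ⁺)(y - λ⁻)` with `λ⁻ < 0 < λ⁺`. For large `x` we have
`y > 0 > λ⁻` and `y' > 0`, hence `y > λ⁺`. Wherever `y` meets `λ⁺` we get `y' = 0 < (λ⁺)'`, so the
graph of `y` can only cross that of `λ⁺` from above to below as `x` increases; a crossing at some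
`x₀` would therefore keep `y ≤ λ⁺` on all of `[x₀, ∞)`. Thus `y > λ⁺` everywhere, and then `y' > 0`.
-/

open Filter

theorem lt_of_eventually_lt_of_deriv_lt_of_eq {f f' B B' : ℝ → ℝ}
    (hf : ∀ x, HasDerivAt f (f' x) x) (hB : ∀ x, HasDerivAt B (B' x) x)
    (htouch : ∀ x, f x = B x → f' x < B' x) (hlarge : ∀ᶠ x in atTop, B x < f x) (x : ℝ) :
    B x < f x := by
  by_contra! hle
  obtain ⟨b, hb, hxb⟩ := (hlarge.and (eventually_ge_atTop x)).exists
  have hfB : f b ≤ B b :=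
    image_le_of_deriv_right_lt_deriv_boundary (fun t _ => (hf t).continuousAt.continuousWithinAt)
      (fun t _ => (hf t).hasDerivWithinAt) hle hB (fun t _ => htouch t) ⟨hxb, le_rfl⟩
  exact hfB.not_gt hb

namespace Riccati

/-- The roots `λ±(x)` of `λ² - xλ - c`, i.e. the nullclines of `y' = y² - xy - c`. -/
noncomputable def upperNullcline (c x : ℝ) : ℝ := (x + √(x ^ 2 + 4 * c)) / 2

noncomputable def lowerNullcline (c x : ℝ) : ℝ := (x - √(x ^ 2 + 4 * c)) / 2

variable {c : ℝ}

theorem sq_sub_mul_sub_eq_mul_nullcline (hc : 0 ≤ c) (x y : ℝ) :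
    y ^ 2 - x * y - c = (y - upperNullcline c x) * (y - lowerNullcline c x) := by
  have hsq : √(x ^ 2 + 4 * c) ^ 2 = x ^ 2 + 4 * c := Real.sq_sqrt (by positivity)
  unfold upperNullcline lowerNullcline
  linear_combination (1 / 4 : ℝ) * hsq

theorem abs_lt_sqrt_sq_add (hc : 0 < c) (x : ℝ) : |x| < √(x ^ 2 + 4 * c) := by
  rw [← Real.sqrt_sq_eq_abs]
  exact Real.sqrt_lt_sqrt (sq_nonneg x) (by linarith)

theorem lowerNullcline_le_upperNullcline (c x : ℝ) : lowerNullcline c x ≤ upperNullcline c x := by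
  unfold lowerNullcline upperNullcline
  linarith [Real.sqrt_nonneg (x ^ 2 + 4 * c)]

theorem lowerNullcline_neg (hc : 0 < c) (x : ℝ) : lowerNullcline c x < 0 := by
  have := abs_lt_sqrt_sq_add hc x
  unfold lowerNullcline
  linarith [le_abs_self x]

theorem hasDerivAt_upperNullcline (hc : 0 < c) (x : ℝ) :
    HasDerivAt (upperNullcline c) ((1 + x / √(x ^ 2 + 4 * c)) / 2) x := by
  have hpos : x ^ 2 + 4 * c ≠ 0 := by positivity
  have hsqrt := ((hasDerivAt_pow 2 x).add_const (4 * c)).sqrt hpos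
  refine (((hasDerivAt_id' x).add hsqrt).div_const 2).congr_deriv ?_
  norm_num [mul_div_mul_left]

theorem upperNullcline_deriv_pos (hc : 0 < c) (x : ℝ) : 0 < (1 + x / √(x ^ 2 + 4 * c)) / 2 := by
  have habs := abs_lt_sqrt_sq_add hc x
  have hs : 0 < √(x ^ 2 + 4 * c) := (abs_nonneg x).trans_lt habs
  have : -1 < x / √(x ^ 2 + 4 * c) := by
    rw [lt_div_iff₀ hs]
    linarith [neg_abs_le x]
  linarith

end Riccati

open Riccati in
/-- Riccati comparison: if y solves y' = y² − xy − (n − 1/2) with n > 1/2 and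
y is positive with positive derivative for all large x, then y' > 0 everywhere
and y(x) > (x + √(x² + 4n − 2))/2 for all real x. -/
theorem riccati_bound (n : ℝ) (hn : n > 1/2) (y : ℝ → ℝ)
    (hy : ContDiff ℝ 1 y)
    (hode : ∀ x : ℝ, deriv y x = (y x)^2 - x * y x - (n - 1/2))
    (hlarge : ∃ X : ℝ, ∀ x ≥ X, 0 < y x ∧ 0 < deriv y x) :
    ∀ x : ℝ, 0 < deriv y x ∧ y x > (x + Real.sqrt (x^2 + 4*n - 2))/2 := by
  have hc : 0 < n - 1 / 2 := by linarith
  have hfactor x :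
      deriv y x = (y x - upperNullcline (n - 1/2) x) * (y x - lowerNullcline (n - 1/2) x) :=
    (hode x).trans (sq_sub_mul_sub_eq_mul_nullcline hc.le x (y x))
  have hmain : ∀ x, upperNullcline (n - 1/2) x < y x := by
    refine lt_of_eventually_lt_of_deriv_lt_of_eq
      (fun x => (hy.differentiable one_ne_zero x).hasDerivAt) (hasDerivAt_upperNullcline hc)
      (fun x hx => ?_) ?_
    · rw [hfactor, hx, sub_self, zero_mul]
      exact upperNullcline_deriv_pos hc x
    · obtain ⟨X, hX⟩ := hlarge
      filter_upwards [eventually_ge_atTop X] with x hx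
      have hlower : 0 < y x - lowerNullcline (n - 1/2) x := by
        linarith [(hX x hx).1, lowerNullcline_neg hc x]
      exact sub_pos.mp ((mul_pos_iff_of_pos_right hlower).mp (hfactor x ▸ (hX x hx).2))
  intro x
  refine ⟨?_, ?_⟩
  · rw [hfactor]
    exact mul_pos (sub_pos.mpr (hmain x))
      (sub_pos.mpr ((lowerNullcline_le_upperNullcline _ x).trans_lt (hmain x)))
  · rw [gt_iff_lt, show x ^ 2 + 4 * n - 2 = x ^ 2 + 4 * (n - 1/2) by ring]
    exact hmain x
end

section
/- Let n > 1/2 and let Φ(x) = U(n−1, x)/U(n, x) where U is the parabolic cylinder function. Then for all real x, Φ(x) > (x + √(x² + 4n − 2))/2 and Φ'(x) > 0. -/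
/-!
By the recurrences, `Φ = U(n-1, ·) / U(n, ·)` solves the Riccati equation
`Φ' = Φ² - xΦ - (n - 1/2)`, whose right-hand side vanishes exactly at the roots of
`y² - xy - (n - 1/2)`; the larger one `r(x) = (x + √(x² + 4n - 2)) / 2` is strictly increasing.
Near `+∞`, `Φ > 0` and `Φ' > 0` force `Φ > r`. Going left, `Φ` can never fall to `r`: at a
meeting point `Φ' = 0 < r'`, so `Φ - r` would cross zero downwards there. Hence `Φ > r`
everywhere, and then the Riccati equation gives `Φ' > 0`.
-/

open Filter Set Topology

theorem HasDerivAt.nonneg_of_forall_lt_imp_le {f : ℝ → ℝ} {f' x : ℝ} (hf : HasDerivAt f f' x)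
    (hle : ∀ y, x < y → f x ≤ f y) : 0 ≤ f' := by
  have hslope : Tendsto (slope f x) (𝓝[>] x) (𝓝 f') :=
    (hasDerivWithinAt_iff_tendsto_slope' (lt_irrefl x)).mp hf.hasDerivWithinAt
  refine ge_of_tendsto hslope ?_
  filter_upwards [self_mem_nhdsWithin] with y (hy : x < y)
  rw [slope_def_field]
  exact div_nonneg (sub_nonneg.mpr (hle y hy)) (sub_nonneg.mpr hy.le)

theorem pos_of_eventually_pos_of_deriv_neg_at_zero {f f' : ℝ → ℝ}
    (hf : ∀ x, HasDerivAt f (f' x) x) (hzero : ∀ x, f x = 0 → f' x < 0)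
    (hev : ∀ᶠ x in atTop, 0 < f x) (x : ℝ) : 0 < f x := by
  by_contra! hx
  have hcont : Continuous f := continuous_iff_continuousAt.mpr fun y => (hf y).continuousAt
  obtain ⟨X, hX⟩ := eventually_atTop.mp hev
  set S := {y | f y ≤ 0}
  have hbdd : BddAbove S := ⟨X, fun y hy => not_lt.mp fun hXy => (hX y hXy.le).not_ge hy⟩
  -- the last zero `x₁` of `f` would be crossed upwards
  set x₁ := sSup S
  have hx₁ : f x₁ ≤ 0 := (isClosed_le hcont continuous_const).csSup_mem ⟨x, hx⟩ hbdd
  have hright : ∀ y, x₁ < y → 0 < f y := fun y hy =>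
    not_le.mp fun hfy => (le_csSup hbdd hfy).not_gt hy
  have hx₁_zero : f x₁ = 0 := by
    refine le_antisymm hx₁ (ge_of_tendsto (hcont.continuousWithinAt (s := Ioi x₁)).tendsto ?_)
    filter_upwards [self_mem_nhdsWithin] with y hy using (hright y hy).le
  have := (hf x₁).nonneg_of_forall_lt_imp_le fun y hy => hx₁_zero ▸ (hright y hy).le
  exact (hzero x₁ hx₁_zero).not_ge this

/-- The larger root of `y ^ 2 - x * y - c`. -/
noncomputable def upperRoot (c x : ℝ) : ℝ := (x + √(x ^ 2 + 4 * c)) / 2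

section upperRoot

variable {c : ℝ}

theorem upperRoot_sq_sub (hc : 0 ≤ c) (x : ℝ) : upperRoot c x ^ 2 - x * upperRoot c x - c = 0 := by
  have hs := Real.sq_sqrt (by positivity : 0 ≤ x ^ 2 + 4 * c)
  unfold upperRoot
  linear_combination hs / 4

theorem upperRoot_lt_iff (hc : 0 ≤ c) {x y : ℝ} (hy : 0 < y) :
    upperRoot c x < y ↔ 0 < y ^ 2 - x * y - c := by
  set s := √(x ^ 2 + 4 * c)
  have hs : s ^ 2 = x ^ 2 + 4 * c := Real.sq_sqrt (by positivity)
  have hxs : x ≤ s := (le_abs_self x).trans (Real.abs_le_sqrt (by linarith))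
  -- the smaller root `(x - s) / 2` is nonpositive
  have hfactor : y ^ 2 - x * y - c = (y - (x + s) / 2) * (y - (x - s) / 2) := by
    linear_combination hs / 4
  have hsmall : (x - s) / 2 < y := by linarith
  rw [hfactor, mul_pos_iff_of_pos_right (by linarith)]
  exact ⟨fun h => by unfold upperRoot at h; linarith, fun h => by unfold upperRoot; linarith⟩

theorem upperRoot_pos (hc : 0 < c) (x : ℝ) : 0 < upperRoot c x := by
  have hx : |x| < √(x ^ 2 + 4 * c) := Real.lt_sqrt_of_sq_lt (by rw [sq_abs]; linarith)
  unfold upperRoot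
  linarith [neg_abs_le x]

theorem hasDerivAt_upperRoot (hc : 0 < c) (x : ℝ) :
    HasDerivAt (upperRoot c) (upperRoot c x / √(x ^ 2 + 4 * c)) x := by
  have hq : 0 < x ^ 2 + 4 * c := by positivity
  have hsqrt : HasDerivAt (fun y => √(y ^ 2 + 4 * c)) (2 * x / (2 * √(x ^ 2 + 4 * c))) x := by
    refine HasDerivAt.sqrt ?_ hq.ne'
    simpa using (hasDerivAt_pow 2 x).add_const (4 * c)
  refine (((hasDerivAt_id' x).add hsqrt).div_const 2).congr_deriv ?_
  unfold upperRoot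
  field_simp [(Real.sqrt_pos.mpr hq).ne']
  ring

end upperRoot

theorem hasDerivAt_div_riccati {u v : ℝ → ℝ} {c x : ℝ}
    (hv : HasDerivAt v (x / 2 * v x - u x) x) (hu : HasDerivAt u (-(x / 2) * u x - c * v x) x)
    (hv0 : v x ≠ 0) :
    HasDerivAt (fun t => u t / v t) ((u x / v x) ^ 2 - x * (u x / v x) - c) x := by
  refine (hu.div hv hv0).congr_deriv ?_
  field_simp
  ring

/-- Lower bound for Φ_n(x) = U(n−1,x)/U(n,x). The parabolic cylinder function
U is characterized by the difference-differential system
U'(m,x) = (x/2)U(m,x) − U(m−1,x),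
U'(m−1,x) = −(x/2)U(m−1,x) − (m−1/2)U(m,x),
together with U(n,·) nonvanishing and Φ positive and increasing as x → +∞.
Then for all real x, Φ(x) > (x + √(x² + 4n − 2))/2 and Φ'(x) > 0. -/
theorem pcf_ratio_lower_bound (n : ℝ) (hn : n > 1/2) (U : ℝ → ℝ → ℝ)
    (hD1 : ∀ m x : ℝ, HasDerivAt (U m) (x/2 * U m x - U (m-1) x) x)
    (hD2 : ∀ m x : ℝ, HasDerivAt (U (m-1)) (-(x/2) * U (m-1) x - (m - 1/2) * U m x) x)
    (hU : ∀ x : ℝ, U n x ≠ 0)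
    (hasymp : ∀ᶠ x in atTop,
      0 < U (n-1) x / U n x ∧ 0 < deriv (fun t => U (n-1) t / U n t) x) :
    ∀ x : ℝ, U (n-1) x / U n x > (x + Real.sqrt (x^2 + 4*n - 2))/2 ∧
      0 < deriv (fun t => U (n-1) t / U n t) x := by
  set Φ : ℝ → ℝ := fun t => U (n-1) t / U n t
  have hc : 0 < n - 1/2 := by linarith
  have hΦ : ∀ x, HasDerivAt Φ (Φ x ^ 2 - x * Φ x - (n - 1/2)) x := fun x =>
    hasDerivAt_div_riccati (hD1 n x) (hD2 n x) (hU x)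
  have hev : ∀ᶠ x in atTop, 0 < Φ x - upperRoot (n - 1/2) x := by
    filter_upwards [hasymp] with x ⟨hpos, hderiv⟩
    rw [(hΦ x).deriv] at hderiv
    exact sub_pos.mpr ((upperRoot_lt_iff hc.le hpos).mpr hderiv)
  have hΦ_gt : ∀ x, upperRoot (n - 1/2) x < Φ x := fun x => sub_pos.mp <|
    pos_of_eventually_pos_of_deriv_neg_at_zero (fun x => (hΦ x).sub (hasDerivAt_upperRoot hc x))
      (fun x hx => by
        rw [Pi.sub_apply, sub_eq_zero] at hx
        rw [hx, upperRoot_sq_sub hc.le, zero_sub, neg_lt_zero]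
        exact div_pos (upperRoot_pos hc x) (Real.sqrt_pos.mpr (by positivity)))
      hev x
  intro x
  refine ⟨?_, ?_⟩
  · convert hΦ_gt x using 1
    rw [upperRoot]
    congr 3
    ring
  · rw [(hΦ x).deriv]
    exact (upperRoot_lt_iff hc.le ((upperRoot_pos hc x).trans (hΦ_gt x))).mp (hΦ_gt x)
end

section
/- For n > 1/2 and all real x, the function g(x) = (1/2)√(x² + 4n + 2)·[(n + 1/2)·(x + √(x² + 4n − 2))/(x + √(x² + 4n + 2)) − n] − x/4 is strictly negative; indeed g(x) = −(n + 1/2)·(x² + 4n − √(x² + 4n + 2)·√(x² + 4n − 2)) / (2(x + √(x² + 4n + 2))) < 0. -/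
/-!
Writing `s = √(x² + 4n + 2)` and `t = √(x² + 4n - 2)`, the closed form is a rational identity that
uses only `s² = x² + 4n + 2`. Its sign is then read off: `x + s > 0` because `s > |x|`, and
`s * t = √((x² + 4n)² - 4) < x² + 4n`.
-/

open Real

theorem add_sqrt_sq_add_pos {c : ℝ} (hc : 0 < c) (x : ℝ) : 0 < x + √(x ^ 2 + c) := by
  have hx : |x| < √(x ^ 2 + c) := by
    rw [← sqrt_sq_eq_abs]
    exact sqrt_lt_sqrt (sq_nonneg x) (lt_add_of_pos_right _ hc)
  linarith [neg_abs_le x]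

theorem sqrt_add_mul_sqrt_sub_lt {a d : ℝ} (ha : 0 < a) (hd : d ≠ 0) :
    √(a + d) * √(a - d) < a := by
  rcases lt_or_ge (a + d) 0 with hneg | hnonneg
  · rwa [sqrt_eq_zero_of_nonpos hneg.le, zero_mul]
  · rw [← sqrt_mul hnonneg, sqrt_lt' ha]
    nlinarith [sq_pos_of_ne_zero hd]

theorem g_eq_of_sq_eq {n x s : ℝ} (t : ℝ) (hs : s ^ 2 = x ^ 2 + 4 * n + 2) (hxs : x + s ≠ 0) :
    (1/2) * s * ((n + 1/2) * (x + t) / (x + s) - n) - x/4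
      = -((n + 1/2) * (x ^ 2 + 4 * n - s * t)) / (2 * (x + s)) := by
  field_simp
  linear_combination (-8 * n) * hs

/-- For n > 1/2 the auxiliary function g is strictly negative, with the stated
closed form. -/
theorem g_neg (n : ℝ) (hn : n > 1/2) (x : ℝ) :
    (1/2) * Real.sqrt (x^2 + 4*n + 2) *
        ((n + 1/2) * (x + Real.sqrt (x^2 + 4*n - 2)) / (x + Real.sqrt (x^2 + 4*n + 2)) - n)
      - x/4 < 0 ∧
    (1/2) * Real.sqrt (x^2 + 4*n + 2) *
        ((n + 1/2) * (x + Real.sqrt (x^2 + 4*n - 2)) / (x + Real.sqrt (x^2 + 4*n + 2)) - n)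
      - x/4
      = -((n + 1/2) * (x^2 + 4*n - Real.sqrt (x^2 + 4*n + 2) * Real.sqrt (x^2 + 4*n - 2)))
          / (2 * (x + Real.sqrt (x^2 + 4*n + 2))) := by
  have hden : 0 < x + √(x ^ 2 + 4 * n + 2) := by
    simpa only [add_assoc] using add_sqrt_sq_add_pos (c := 4 * n + 2) (by linarith) x
  have hprod : √(x ^ 2 + 4 * n + 2) * √(x ^ 2 + 4 * n - 2) < x ^ 2 + 4 * n :=
    sqrt_add_mul_sqrt_sub_lt (by positivity) two_ne_zero
  have hs : √(x ^ 2 + 4 * n + 2) ^ 2 = x ^ 2 + 4 * n + 2 := sq_sqrt (by positivity)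
  have heq := g_eq_of_sq_eq (√(x ^ 2 + 4 * n - 2)) hs hden.ne'
  refine ⟨?_, heq⟩
  rw [heq, neg_div]
  exact neg_neg_of_pos (div_pos (mul_pos (by linarith) (by linarith)) (by linarith))
end

section
/- For n > 1/2, with (α, β) = (1/2, −1/2), define h(x) = (n + 1/2)·(x + √(x² + 4n − 2))/(x + √(x² + 4n + 2)). Then h(x) < λ⁺(x)² − x²/4 for all real x, where λ⁺(x) is the largest real root of λ³ − (x²/4 + n)λ − x/4 = 0. -/
set_option maxHeartbeats 1600000 in
/-- For n > 1/2, h(x) = (n + 1/2)·(x + √(x² + 4n − 2))/(x + √(x² + 4n + 2))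
satisfies h(x) < λ⁺(x)² − x²/4 for all real x, where λ⁺(x) is the largest real
root of λ³ − (x²/4 + n)λ − x/4 = 0. -/
theorem h_lt_w (n : ℝ) (hn : n > 1/2) (lam : ℝ → ℝ)
    (hroot : ∀ x : ℝ, (lam x)^3 - (x^2/4 + n)*(lam x) - x/4 = 0)
    (hmax : ∀ x μ : ℝ, μ^3 - (x^2/4 + n)*μ - x/4 = 0 → μ ≤ lam x) :
    ∀ x : ℝ,
      (n + 1/2) * (x + Real.sqrt (x^2 + 4*n - 2)) / (x + Real.sqrt (x^2 + 4*n + 2))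
        < (lam x)^2 - x^2/4 := by
  intro x
  have hm2 : (0:ℝ) < x^2 + 4*n - 2 := by nlinarith [sq_nonneg x]
  have hp2 : (0:ℝ) < x^2 + 4*n + 2 := by nlinarith [sq_nonneg x]
  set sm := Real.sqrt (x^2 + 4*n - 2) with hsmdef
  set sp := Real.sqrt (x^2 + 4*n + 2) with hspdef
  have hsm2 : sm^2 = x^2 + 4*n - 2 := Real.sq_sqrt hm2.le
  have hsp2 : sp^2 = x^2 + 4*n + 2 := Real.sq_sqrt hp2.le
  have hsm0 : 0 < sm := Real.sqrt_pos.mpr hm2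
  have hsp0 : 0 < sp := Real.sqrt_pos.mpr hp2
  have habs : |x| ^ 2 = x ^ 2 := sq_abs x
  have hxa : x ≤ |x| := le_abs_self x
  have hxa' : -|x| ≤ x := neg_abs_le x
  have hsmx : |x| < sm := by nlinarith [abs_nonneg x]
  have hspx : |x| < sp := by nlinarith [abs_nonneg x]
  have hxsm : 0 < x + sm := by linarith
  have hspxp : 0 < sp - x := by linarith
  have hxsp : 0 < x + sp := by linarith
  -- rewrite h in product form
  have key : (n + 1/2) * (x + sm) / (x + sp) = (x + sm) * (sp - x) / 4 := by
    rw [div_eq_div_iff (by linarith) (by norm_num)]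
    linear_combination (-(x + sm)) * hsp2
  rw [key]
  clear_value sm sp
  -- half-sum and half-difference
  set d := (sp - sm)/2 with hddef
  set s := (sp + sm)/2 with hsdef
  have hd0 : 0 < d := by
    have : sm < sp := by nlinarith
    simp only [hddef]; linarith
  have hs0 : 0 < s := by simp only [hsdef]; linarith
  have hds : d * s = 1 := by
    have h1 : d * s = (sp^2 - sm^2)/4 := by simp only [hddef, hsdef]; ring
    rw [h1, hsp2, hsm2]; ring
  have hsmd : sm = s - d := by simp only [hddef, hsdef]; ring
  have hspd : sp = s + d := by simp only [hddef, hsdef]; ring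
  have hsd2 : s^2 + d^2 = x^2 + 4*n := by
    have h1 : s^2 + d^2 = (sp^2 + sm^2)/2 := by simp only [hddef, hsdef]; ring
    rw [h1, hsp2, hsm2]; ring
  clear_value d s
  -- define z
  have hhpos : 0 < (x + sm) * (sp - x) / 4 := by positivity
  have hzarg : 0 ≤ x^2/4 + (x + sm) * (sp - x) / 4 := by positivity
  set z := Real.sqrt (x^2/4 + (x + sm) * (sp - x) / 4) with hzdef
  have hz2 : z^2 = x^2/4 + (x + sm) * (sp - x) / 4 := Real.sq_sqrt hzarg
  have hz0 : 0 < z := Real.sqrt_pos.mpr (by positivity)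
  clear_value z
  have h4z : 4*z^2 = s^2 + 2*x*d - d^2 := by
    rw [hz2, hsmd, hspd]; ring
  have hab4n : (x + sm) * (sp - x) - 4*n = 2*d*(x - d) := by
    rw [hsmd, hspd]; linear_combination hsd2
  -- the key factorization
  have hP : x^2 - (2*z*d*(x-d))^2
      = 2*d^3*(x + s - d)*(s + d - x)*(x - d/2) - x^2*(d*s - 1)*(d*s + 1) := by
    linear_combination (-(d^2*(x-d)^2)) * h4z
  have hxsm' : 0 < x + s - d := by rw [hsmd] at hxsm; linarith
  have hspx' : 0 < s + d - x := by rw [hspd] at hspxp; linarith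
  have hP' : x^2 - (2*z*d*(x-d))^2 = 2*d^3*(x + s - d)*(s + d - x)*(x - d/2) := by
    rw [hP, hds]; ring
  -- key inequality: 2*z*d*(x - d) < x
  have kkey : 2*z*d*(x - d) < x := by
    obtain ⟨L, hLdef⟩ : ∃ L, L = 2*z*d*(x-d) := ⟨_, rfl⟩
    rw [← hLdef] at hP' ⊢
    have hzd : 0 < z*d := mul_pos hz0 hd0
    rcases le_or_gt x 0 with hx0 | hx0
    · -- x ≤ 0 : here L < 0 and x² < L²
      have hq : 0 < d^3*(x + s - d)*(s + d - x)*(d/2 - x) :=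
        mul_pos (mul_pos (mul_pos (pow_pos hd0 3) hxsm') hspx') (by linarith)
      have hneg : 2*d^3*(x + s - d)*(s + d - x)*(x - d/2)
          = -2*(d^3*(x + s - d)*(s + d - x)*(d/2 - x)) := by ring
      have hL2 : x^2 < L^2 := by
        rw [hneg] at hP'; linarith
      have hLneg : L < 0 := by
        rw [hLdef]
        have h1 : 0 < (z*d)*(d-x) := mul_pos hzd (by linarith)
        linarith [h1]
      by_contra hcon
      push_neg at hcon
      have h1 : L*L ≤ x*L := mul_le_mul_of_nonpos_right hcon hLneg.le
      have h2 : x*L ≤ x*x := mul_le_mul_of_nonpos_left hcon hx0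
      linarith [h1, h2, hL2]
    · rcases le_or_gt x d with hxd | hxd
      · -- 0 < x ≤ d : L ≤ 0 < x
        have : L ≤ 0 := by
          rw [hLdef]
          have h1 : 0 ≤ (z*d)*(d-x) := mul_nonneg hzd.le (by linarith)
          linarith [h1]
        linarith
      · -- d < x : x² > L², both positive
        have hq : 0 < d^3*(x + s - d)*(s + d - x)*(x - d/2) :=
          mul_pos (mul_pos (mul_pos (pow_pos hd0 3) hxsm') hspx') (by linarith)
      
        have hL2 : L^2 < x^2 := by
          have h2 : 2*d^3*(x + s - d)*(s + d - x)*(x - d/2)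
              = 2*(d^3*(x + s - d)*(s + d - x)*(x - d/2)) := by ring
          rw [h2] at hP'; linarith
        have hLpos : 0 < L := by
          rw [hLdef]
          have h1 : 0 < (z*d)*(x-d) := mul_pos hzd (by linarith)
          linarith [h1]
        by_contra hcon
        push_neg at hcon
        have h1 : x*x ≤ L*x := mul_le_mul_of_nonneg_right hcon hx0.le
        have h2 : L*x ≤ L*L := mul_le_mul_of_nonneg_left hcon hLpos.le
        linarith [h1, h2, hL2]
  clear hP hP'
  -- cubic is negative at z
  have hpz : z^3 - (x^2/4 + n)*z - x/4 < 0 := by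
    have heq : z^3 - (x^2/4 + n)*z - x/4 = (2*z*d*(x-d) - x)/4 := by
      linear_combination z * hz2 + (z/4) * hab4n
    rw [heq]; linarith
  -- find a root μ ≥ z via IVT
  set f : ℝ → ℝ := fun t => t^3 - (x^2/4 + n)*t - x/4 with hfdef
  have hcont : Continuous f :=
    ((continuous_pow 3).sub (continuous_const.mul continuous_id)).sub continuous_const
  clear_value f
  set M := z + (x^2/4 + n) + |x|/4 + 1 with hMdef
  clear_value M
  have hc0 : 0 < x^2/4 + n := by have := sq_nonneg x; linarith
  have hzM : z ≤ M := by
    simp only [hMdef]; linarith [abs_nonneg x]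
  have hM1 : 1 ≤ M := by simp only [hMdef]; linarith [abs_nonneg x]
  have hMc : x^2/4 + n + |x|/4 + 1 ≤ M := by simp only [hMdef]; linarith
  have hfM : 0 < f M := by
    simp only [hfdef]
    have hMpos : (0:ℝ) < M := by linarith
    have h1 : M*(x^2/4 + n + |x|/4 + 1) ≤ M*M := mul_le_mul_of_nonneg_left hMc hMpos.le
    have h2 : M^2*1 ≤ M^2*M := mul_le_mul_of_nonneg_left hM1 (sq_nonneg M)
    have h3 : |x| * 1 ≤ |x| * M := mul_le_mul_of_nonneg_left hM1 (abs_nonneg x)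
    have h4 : x ≤ |x| := le_abs_self x
    linarith [h1, h2, h3, h4]
  have hfz : f z < 0 := by simp only [hfdef]; exact hpz
  have hmem : (0:ℝ) ∈ Set.Icc (f z) (f M) := ⟨hfz.le, hfM.le⟩
  obtain ⟨μ, hμmem, hμeq⟩ := intermediate_value_Icc hzM hcont.continuousOn hmem
  have hμlam : μ ≤ lam x := hmax x μ (by simpa [hfdef] using hμeq)
  have hzμ : z < μ := by
    rcases lt_or_eq_of_le hμmem.1 with h | h
    · exact h
    · exfalso
      have : f z = 0 := by rw [h]; exact hμeq
      rw [this] at hfz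
      exact lt_irrefl 0 hfz
  have hzlam : z < lam x := lt_of_lt_of_le hzμ hμlam
  have hsq : z*z < lam x * lam x := mul_self_lt_mul_self hz0.le hzlam
  linarith [hz2, hsq]
end

section
/- For n > 1/2, the lower bound λ⁺(x) for Φ_n(x) − x/2 is sharper than √(x² + 4n − 2)/2 for all real x: λ⁺(x) > (1/2)√(x² + 4n − 2), where λ⁺(x) is the largest real root of λ³ − (x²/4 + n)λ − x/4 = 0. -/
open Filter

lemma tendsto_depressed_cubic_atTop (a b : ℝ) :
    Tendsto (fun t : ℝ => t ^ 3 - a * t - b) atTop atTop := by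
  have h : Tendsto (fun t : ℝ => t * (t ^ 2 - a)) atTop atTop :=
    tendsto_id.atTop_mul_atTop₀
      (tendsto_atTop_add_const_right _ (-a) (tendsto_pow_atTop two_ne_zero))
  refine tendsto_atTop_add_const_right _ (-b) (h.congr fun t => ?_)
  ring

lemma exists_depressed_cubic_root_gt {a b z : ℝ} (hz : z ^ 3 - a * z - b < 0) :
    ∃ c, z < c ∧ c ^ 3 - a * c - b = 0 :=
  intermediate_value_Ioi (by fun_prop) (tendsto_depressed_cubic_atTop a b) hz

lemma riccati_cubic_neg_at_half_sqrt {n : ℝ} (hn : n > 1/2) (x : ℝ) :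
    let z := (1/2) * Real.sqrt (x^2 + 4*n - 2)
    z^3 - (x^2/4 + n) * z - x/4 < 0 := by
  intro z
  have hz_sq : z ^ 2 = x^2/4 + n - 1/2 := by
    rw [mul_pow, Real.sq_sqrt (by nlinarith [sq_nonneg x])]
    ring
  have hx_lt : |x| < 2 * z := by
    calc |x| = Real.sqrt (x ^ 2) := (Real.sqrt_sq_eq_abs x).symm
      _ < Real.sqrt (x^2 + 4*n - 2) := Real.sqrt_lt_sqrt (sq_nonneg x) (by linarith)
      _ = 2 * z := by ring
  calc z^3 - (x^2/4 + n) * z - x/4 = -z/2 - x/4 := by linear_combination z * hz_sq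
    _ < 0 := by linarith [neg_le_abs x]

theorem lam_gt_riccati_bound_general (n : ℝ) (hn : n > 1/2) (lam : ℝ → ℝ)
    (hmax : ∀ x μ : ℝ, μ^3 - (x^2/4 + n)*μ - x/4 = 0 → μ ≤ lam x) :
    ∀ x : ℝ, lam x > (1/2) * Real.sqrt (x^2 + 4*n - 2) := by
  intro x
  obtain ⟨c, hzc, hc⟩ := exists_depressed_cubic_root_gt (riccati_cubic_neg_at_half_sqrt hn x)
  exact hzc.trans_le (hmax x c hc)

/-- For n > 1/2, the largest real root λ⁺(x) of λ³ − (x²/4 + n)λ − x/4 = 0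
satisfies λ⁺(x) > (1/2)√(x² + 4n − 2) for all real x. -/
theorem lam_gt_riccati_bound (n : ℝ) (hn : n > 1/2) (lam : ℝ → ℝ)
    (hroot : ∀ x : ℝ, (lam x)^3 - (x^2/4 + n)*(lam x) - x/4 = 0)
    (hmax : ∀ x μ : ℝ, μ^3 - (x^2/4 + n)*μ - x/4 = 0 → μ ≤ lam x) :
    ∀ x : ℝ, lam x > (1/2) * Real.sqrt (x^2 + 4*n - 2) :=
  lam_gt_riccati_bound_general n hn lam hmax
end
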